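/- arXiv:1203.4422 — 3 statements merged into one kernel-verified Lean document; each statement's English description precedes it below -/
import Mathlib

section
/- For any two distributions F and F' in the family 𝓕, the C-optimal estimators computed under F and under F' coincide ν-almost everywhere; that is, the minimizer ρ_C of the MSE over the class C = A + B does not depend on the choice of F ∈ 𝓕 (claim 1 of Theorem 1). -/
open MeasureTheory

noncomputable section

abbrev Euc (k : ℕ) : Type := EuclideanSpace ℝ (Fin k)

abbrev XSp (M₁ M₂ : ℕ) : Type := Euc M₁ × Euc M₂

abbrev ΩSp (M₁ M₂ N : ℕ) : Type := XSp M₁ M₂ × Euc N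

/-- Mean square error of a (multi-domain) estimator `ρ` under joint law `F` of `((X₁,X₂),Y)`. -/
def MSE {M₁ M₂ N : ℕ} (F : Measure (ΩSp M₁ M₂ N)) (ρ : XSp M₁ M₂ → Euc N) : ℝ :=
  ∫ ω, ‖ω.2 - ρ ω.1‖ ^ 2 ∂F

/-- The class `C = A + B` of estimators `(x₁,x₂) ↦ φ(x₁) + ψ(x₂)`, `φ ∈ A`, `ψ ∈ B`. -/
def Cset {M₁ M₂ N : ℕ} (A : Submodule ℝ (Euc M₁ → Euc N)) (B : Submodule ℝ (Euc M₂ → Euc N)) :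
    Set (XSp M₁ M₂ → Euc N) :=
  {ρ | ∃ φ ∈ A, ∃ ψ ∈ B, ρ = fun x => φ x.1 + ψ x.2}

/-- The family `𝓕` of joint distributions consistent with the partial knowledge
`(ν, φ_A, ψ_B, c)`. -/
def SetF {M₁ M₂ N : ℕ} (ν : Measure (XSp M₁ M₂))
    (A : Submodule ℝ (Euc M₁ → Euc N)) (B : Submodule ℝ (Euc M₂ → Euc N))
    (φA : Euc M₁ → Euc N) (ψB : Euc M₂ → Euc N) (c : ℝ) :
    Set (Measure (ΩSp M₁ M₂ N)) :=
  {F | IsProbabilityMeasure F ∧ F.map Prod.fst = ν ∧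
    MemLp (fun ω : ΩSp M₁ M₂ N => ω.2) 2 F ∧
    (∀ φ ∈ A, MSE F (fun x => φA x.1) ≤ MSE F (fun x => φ x.1)) ∧
    (∀ ψ ∈ B, MSE F (fun x => ψB x.2) ≤ MSE F (fun x => ψ x.2)) ∧
    ∫ ω, ‖ω.2‖ ^ 2 ∂F = c}

/-- The σ-algebra generated by `(X₁,X₂)` on the sample space. -/
def sigmaX (M₁ M₂ N : ℕ) : MeasurableSpace (ΩSp M₁ M₂ N) :=
  MeasurableSpace.comap Prod.fst inferInstance

/-- The σ-algebra generated by `X₁` on the sample space. -/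
def sigmaX1 (M₁ M₂ N : ℕ) : MeasurableSpace (ΩSp M₁ M₂ N) :=
  MeasurableSpace.comap (fun ω => ω.1.1) inferInstance

/-- The σ-algebra generated by `X₁` on the `(X₁,X₂)`-space. -/
def sigmaX1' (M₁ M₂ : ℕ) : MeasurableSpace (XSp M₁ M₂) :=
  MeasurableSpace.comap Prod.fst inferInstance

/-- Multi-domain regret of `ρ(X₁,X₂)`: its MSE minus that of `E_F[Y | X₁,X₂]`. -/
def REG {M₁ M₂ N : ℕ} (F : Measure (ΩSp M₁ M₂ N)) (ρ : XSp M₁ M₂ → Euc N) : ℝ :=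
  MSE F ρ - ∫ ω, ‖ω.2 - condExp (sigmaX M₁ M₂ N) F (fun ω' => ω'.2) ω‖ ^ 2 ∂F

/-- Mean square error of a single-domain estimator `ρ(X₁)`. -/
def MSE1 {M₁ M₂ N : ℕ} (F : Measure (ΩSp M₁ M₂ N)) (ρ : Euc M₁ → Euc N) : ℝ :=
  ∫ ω, ‖ω.2 - ρ ω.1.1‖ ^ 2 ∂F

/-- Single-domain regret of `ρ(X₁)`: its MSE minus that of `E_F[Y | X₁]`. -/
def REG1 {M₁ M₂ N : ℕ} (F : Measure (ΩSp M₁ M₂ N)) (ρ : Euc M₁ → Euc N) : ℝ :=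
  MSE1 F ρ - ∫ ω, ‖ω.2 - condExp (sigmaX1 M₁ M₂ N) F (fun ω' => ω'.2) ω‖ ^ 2 ∂F

local notation "⟪" x ", " y "⟫" => @inner ℝ _ _ x y

section AuxGen

variable {α : Type*} [MeasurableSpace α] {μ : Measure α}
variable {E : Type*} [NormedAddCommGroup E] [InnerProductSpace ℝ E]

lemma aux_integrable_inner {f g : α → E} (hf : MemLp f 2 μ) (hg : MemLp g 2 μ) :
    Integrable (fun x => ⟪f x, g x⟫) μ := by
  have h := L2.integrable_inner (𝕜 := ℝ) (hf.toLp f) (hg.toLp g)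
  refine h.congr ?_
  filter_upwards [hf.coeFn_toLp, hg.coeFn_toLp] with x h1 h2
  rw [h1, h2]

lemma aux_integrable_norm_sq {f : α → E} (hf : MemLp f 2 μ) :
    Integrable (fun x => ‖f x‖ ^ 2) μ := by
  simpa [real_inner_self_eq_norm_sq] using aux_integrable_inner hf hf

lemma aux_expand {u v : α → E} (hu : MemLp u 2 μ) (hv : MemLp v 2 μ) (t : ℝ) :
    ∫ x, ‖u x - t • v x‖ ^ 2 ∂μ
      = ∫ x, ‖u x‖ ^ 2 ∂μ - 2 * t * ∫ x, ⟪u x, v x⟫ ∂μ + t ^ 2 * ∫ x, ‖v x‖ ^ 2 ∂μ := by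
  have hpt : ∀ x, ‖u x - t • v x‖ ^ 2
      = ‖u x‖ ^ 2 - 2 * t * ⟪u x, v x⟫ + t ^ 2 * ‖v x‖ ^ 2 := by
    intro x
    rw [norm_sub_sq_real, real_inner_smul_right, norm_smul]
    simp [mul_pow, sq_abs]
    ring
  have h1 : Integrable (fun x => ‖u x‖ ^ 2) μ := aux_integrable_norm_sq hu
  have h2 : Integrable (fun x => 2 * t * ⟪u x, v x⟫) μ :=
    (aux_integrable_inner hu hv).const_mul _
  have h3 : Integrable (fun x => t ^ 2 * ‖v x‖ ^ 2) μ :=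
    (aux_integrable_norm_sq hv).const_mul _
  calc ∫ x, ‖u x - t • v x‖ ^ 2 ∂μ
      = ∫ x, (‖u x‖ ^ 2 - 2 * t * ⟪u x, v x⟫ + t ^ 2 * ‖v x‖ ^ 2) ∂μ :=
        integral_congr_ae (Filter.Eventually.of_forall fun x => hpt x)
    _ = _ := by
        have h12 : Integrable (fun x => ‖u x‖ ^ 2 - 2 * t * ⟪u x, v x⟫) μ := h1.sub h2
        rw [integral_add h12 h3, integral_sub h1 h2, integral_const_mul,
          integral_const_mul]

lemma aux_orth {u v : α → E} (hu : MemLp u 2 μ) (hv : MemLp v 2 μ)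
    (h : ∀ t : ℝ, ∫ x, ‖u x‖ ^ 2 ∂μ ≤ ∫ x, ‖u x - t • v x‖ ^ 2 ∂μ) :
    ∫ x, ⟪u x, v x⟫ ∂μ = 0 := by
  set I := ∫ x, ⟪u x, v x⟫ ∂μ with hI
  set J := ∫ x, ‖v x‖ ^ 2 ∂μ with hJdef
  have hJ : 0 ≤ J := integral_nonneg fun x => sq_nonneg _
  have key : ∀ t : ℝ, 0 ≤ -(2 * t * I) + t ^ 2 * J := by
    intro t
    have h0 := h t
    rw [aux_expand hu hv t] at h0
    linarith
  have hJ1 : (0:ℝ) < J + 1 := by linarith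
  have h1 := key (I / (J + 1))
  have heq : -(2 * (I / (J + 1)) * I) + (I / (J + 1)) ^ 2 * J
      = -(I ^ 2 * (J + 2)) / (J + 1) ^ 2 := by
    field_simp
    ring
  rw [heq] at h1
  have hp : (0:ℝ) < (J + 1) ^ 2 := pow_pos hJ1 2
  have h2 : 0 ≤ -(I ^ 2 * (J + 2)) := by
    by_contra hcon
    push_neg at hcon
    have := div_neg_of_neg_of_pos hcon hp
    linarith
  have h3 : I ^ 2 = 0 := by nlinarith [sq_nonneg I]
  exact pow_eq_zero_iff two_ne_zero |>.mp h3

lemma aux_parallelogram {u v : α → E} (hu : MemLp u 2 μ) (hv : MemLp v 2 μ) :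
    ∫ x, ‖(2:ℝ)⁻¹ • (u x + v x)‖ ^ 2 ∂μ
      = (∫ x, ‖u x‖ ^ 2 ∂μ + ∫ x, ‖v x‖ ^ 2 ∂μ) / 2 - 4⁻¹ * ∫ x, ‖u x - v x‖ ^ 2 ∂μ := by
  have hpt : ∀ x, ‖(2:ℝ)⁻¹ • (u x + v x)‖ ^ 2
      = (‖u x‖ ^ 2 + ‖v x‖ ^ 2) / 2 - 4⁻¹ * ‖u x - v x‖ ^ 2 := by
    intro x
    have hpar := parallelogram_law_with_norm ℝ (u x) (v x)
    rw [norm_smul]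
    simp only [norm_inv, Real.norm_ofNat, mul_pow]
    nlinarith [hpar]
  have h1 : Integrable (fun x => ‖u x‖ ^ 2) μ := aux_integrable_norm_sq hu
  have h2 : Integrable (fun x => ‖v x‖ ^ 2) μ := aux_integrable_norm_sq hv
  have h3 : Integrable (fun x => ‖u x - v x‖ ^ 2) μ := aux_integrable_norm_sq (hu.sub hv)
  calc ∫ x, ‖(2:ℝ)⁻¹ • (u x + v x)‖ ^ 2 ∂μ
      = ∫ x, ((‖u x‖ ^ 2 + ‖v x‖ ^ 2) / 2 - 4⁻¹ * ‖u x - v x‖ ^ 2) ∂μ :=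
        integral_congr_ae (Filter.Eventually.of_forall hpt)
    _ = _ := by
        have h12 : Integrable (fun x => (‖u x‖ ^ 2 + ‖v x‖ ^ 2) / 2) μ := (h1.add h2).div_const 2
        rw [integral_sub h12 (h3.const_mul _), integral_div, integral_add h1 h2,
          integral_const_mul]

end AuxGen

section AuxSpec

variable {M₁ M₂ N : ℕ}

lemma map_X1 {F : Measure (ΩSp M₁ M₂ N)} {ν : Measure (XSp M₁ M₂)} (h : F.map Prod.fst = ν) :
    F.map (fun ω : ΩSp M₁ M₂ N => ω.1.1) = ν.map Prod.fst := by
  rw [show (fun ω : ΩSp M₁ M₂ N => ω.1.1) = Prod.fst ∘ Prod.fst from rfl,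
    ← Measure.map_map measurable_fst measurable_fst, h]

lemma map_X2 {F : Measure (ΩSp M₁ M₂ N)} {ν : Measure (XSp M₁ M₂)} (h : F.map Prod.fst = ν) :
    F.map (fun ω : ΩSp M₁ M₂ N => ω.1.2) = ν.map Prod.snd := by
  rw [show (fun ω : ΩSp M₁ M₂ N => ω.1.2) = Prod.snd ∘ Prod.fst from rfl,
    ← Measure.map_map measurable_snd measurable_fst, h]

lemma memL2_comp1 {F : Measure (ΩSp M₁ M₂ N)} {ν : Measure (XSp M₁ M₂)}
    (h : F.map Prod.fst = ν) {φ : Euc M₁ → Euc N} (hm : Measurable φ)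
    (hl : MemLp φ 2 (ν.map Prod.fst)) : MemLp (fun ω : ΩSp M₁ M₂ N => φ ω.1.1) 2 F := by
  have h1 : AEStronglyMeasurable φ (F.map (fun ω : ΩSp M₁ M₂ N => ω.1.1)) :=
    hm.aestronglyMeasurable
  have h2 := (memLp_map_measure_iff h1
    ((measurable_fst.comp measurable_fst).aemeasurable)).mp (by rw [map_X1 h]; exact hl)
  exact h2

lemma memL2_comp2 {F : Measure (ΩSp M₁ M₂ N)} {ν : Measure (XSp M₁ M₂)}
    (h : F.map Prod.fst = ν) {ψ : Euc M₂ → Euc N} (hm : Measurable ψ)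
    (hl : MemLp ψ 2 (ν.map Prod.snd)) : MemLp (fun ω : ΩSp M₁ M₂ N => ψ ω.1.2) 2 F := by
  have h1 : AEStronglyMeasurable ψ (F.map (fun ω : ΩSp M₁ M₂ N => ω.1.2)) :=
    hm.aestronglyMeasurable
  have h2 := (memLp_map_measure_iff h1
    ((measurable_snd.comp measurable_fst).aemeasurable)).mp (by rw [map_X2 h]; exact hl)
  exact h2

lemma memL2_nu1 {ν : Measure (XSp M₁ M₂)} {φ : Euc M₁ → Euc N} (hm : Measurable φ)
    (hl : MemLp φ 2 (ν.map Prod.fst)) : MemLp (fun x : XSp M₁ M₂ => φ x.1) 2 ν :=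
  (memLp_map_measure_iff hm.aestronglyMeasurable measurable_fst.aemeasurable).mp hl

lemma memL2_nu2 {ν : Measure (XSp M₁ M₂)} {ψ : Euc M₂ → Euc N} (hm : Measurable ψ)
    (hl : MemLp ψ 2 (ν.map Prod.snd)) : MemLp (fun x : XSp M₁ M₂ => ψ x.2) 2 ν :=
  (memLp_map_measure_iff hm.aestronglyMeasurable measurable_snd.aemeasurable).mp hl

lemma integral_comp_fst {F : Measure (ΩSp M₁ M₂ N)} {ν : Measure (XSp M₁ M₂)}
    (h : F.map Prod.fst = ν) {g : XSp M₁ M₂ → ℝ} (hg : AEStronglyMeasurable g ν) :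
    ∫ ω, g ω.1 ∂F = ∫ x, g x ∂ν := by
  have hg' : AEStronglyMeasurable g (F.map Prod.fst) := by rw [h]; exact hg
  rw [← h]
  exact (integral_map measurable_fst.aemeasurable hg').symm

lemma MSE_formula {ν : Measure (XSp M₁ M₂)}
    {A : Submodule ℝ (Euc M₁ → Euc N)} {B : Submodule ℝ (Euc M₂ → Euc N)}
    (hAmeas : ∀ φ ∈ A, Measurable φ) (hBmeas : ∀ ψ ∈ B, Measurable ψ)
    (hAL2 : ∀ φ ∈ A, MemLp φ 2 (ν.map Prod.fst))
    (hBL2 : ∀ ψ ∈ B, MemLp ψ 2 (ν.map Prod.snd))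
    {φA : Euc M₁ → Euc N} {ψB : Euc M₂ → Euc N} (hφA : φA ∈ A) (hψB : ψB ∈ B) {c : ℝ}
    {F : Measure (ΩSp M₁ M₂ N)} (hF : F ∈ SetF ν A B φA ψB c)
    {φ : Euc M₁ → Euc N} {ψ : Euc M₂ → Euc N} (hφ : φ ∈ A) (hψ : ψ ∈ B) :
    MSE F (fun x => φ x.1 + ψ x.2)
      = c - 2 * ((∫ x, ⟪φA x.1, φ x.1⟫ ∂ν) + ∫ x, ⟪ψB x.2, ψ x.2⟫ ∂ν)
        + ∫ x, ‖φ x.1 + ψ x.2‖ ^ 2 ∂ν := by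
  obtain ⟨hFp, hFfst, hY2, hAopt, hBopt, hc⟩ := hF
  have hφF : MemLp (fun ω : ΩSp M₁ M₂ N => φ ω.1.1) 2 F :=
    memL2_comp1 hFfst (hAmeas φ hφ) (hAL2 φ hφ)
  have hψF : MemLp (fun ω : ΩSp M₁ M₂ N => ψ ω.1.2) 2 F :=
    memL2_comp2 hFfst (hBmeas ψ hψ) (hBL2 ψ hψ)
  have hφAF : MemLp (fun ω : ΩSp M₁ M₂ N => φA ω.1.1) 2 F :=
    memL2_comp1 hFfst (hAmeas φA hφA) (hAL2 φA hφA)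
  have hψBF : MemLp (fun ω : ΩSp M₁ M₂ N => ψB ω.1.2) 2 F :=
    memL2_comp2 hFfst (hBmeas ψB hψB) (hBL2 ψB hψB)
  have hρF : MemLp (fun ω : ΩSp M₁ M₂ N => φ ω.1.1 + ψ ω.1.2) 2 F := hφF.add hψF
  -- orthogonality
  have huA : MemLp (fun ω : ΩSp M₁ M₂ N => ω.2 - φA ω.1.1) 2 F := hY2.sub hφAF
  have hOA : ∫ ω, ⟪ω.2 - φA ω.1.1, φ ω.1.1⟫ ∂F = 0 := by
    apply aux_orth huA hφF
    intro t
    have h := hAopt (φA + t • φ) (A.add_mem hφA (A.smul_mem t hφ))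
    simpa only [MSE, Pi.add_apply, Pi.smul_apply, sub_add_eq_sub_sub] using h
  have huB : MemLp (fun ω : ΩSp M₁ M₂ N => ω.2 - ψB ω.1.2) 2 F := hY2.sub hψBF
  have hOB : ∫ ω, ⟪ω.2 - ψB ω.1.2, ψ ω.1.2⟫ ∂F = 0 := by
    apply aux_orth huB hψF
    intro t
    have h := hBopt (ψB + t • ψ) (B.add_mem hψB (B.smul_mem t hψ))
    simpa only [MSE, Pi.add_apply, Pi.smul_apply, sub_add_eq_sub_sub] using h
  -- cross terms determined by ν
  have hiφ : ∫ ω, ⟪ω.2, φ ω.1.1⟫ ∂F = ∫ x : XSp M₁ M₂, ⟪φA x.1, φ x.1⟫ ∂ν := by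
    have h1 : Integrable (fun ω : ΩSp M₁ M₂ N => ⟪ω.2 - φA ω.1.1, φ ω.1.1⟫) F :=
      aux_integrable_inner huA hφF
    have h2 : Integrable (fun ω : ΩSp M₁ M₂ N => ⟪φA ω.1.1, φ ω.1.1⟫) F :=
      aux_integrable_inner hφAF hφF
    have hsplit : ∫ ω, ⟪ω.2, φ ω.1.1⟫ ∂F
        = (∫ ω, ⟪ω.2 - φA ω.1.1, φ ω.1.1⟫ ∂F) + ∫ ω, ⟪φA ω.1.1, φ ω.1.1⟫ ∂F := by
      rw [← integral_add h1 h2]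
      congr 1
      funext ω
      rw [inner_sub_left]
      ring
    rw [hsplit, hOA, zero_add]
    exact integral_comp_fst hFfst
      (((hAmeas φA hφA).comp measurable_fst).inner
        ((hAmeas φ hφ).comp measurable_fst)).aestronglyMeasurable
  have hiψ : ∫ ω, ⟪ω.2, ψ ω.1.2⟫ ∂F = ∫ x : XSp M₁ M₂, ⟪ψB x.2, ψ x.2⟫ ∂ν := by
    have h1 : Integrable (fun ω : ΩSp M₁ M₂ N => ⟪ω.2 - ψB ω.1.2, ψ ω.1.2⟫) F :=
      aux_integrable_inner huB hψF
    have h2 : Integrable (fun ω : ΩSp M₁ M₂ N => ⟪ψB ω.1.2, ψ ω.1.2⟫) F :=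
      aux_integrable_inner hψBF hψF
    have hsplit : ∫ ω, ⟪ω.2, ψ ω.1.2⟫ ∂F
        = (∫ ω, ⟪ω.2 - ψB ω.1.2, ψ ω.1.2⟫ ∂F) + ∫ ω, ⟪ψB ω.1.2, ψ ω.1.2⟫ ∂F := by
      rw [← integral_add h1 h2]
      congr 1
      funext ω
      rw [inner_sub_left]
      ring
    rw [hsplit, hOB, zero_add]
    exact integral_comp_fst hFfst
      (((hBmeas ψB hψB).comp measurable_snd).inner
        ((hBmeas ψ hψ).comp measurable_snd)).aestronglyMeasurable
  have hsum : ∫ ω, ⟪ω.2, φ ω.1.1 + ψ ω.1.2⟫ ∂F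
      = (∫ ω, ⟪ω.2, φ ω.1.1⟫ ∂F) + ∫ ω, ⟪ω.2, ψ ω.1.2⟫ ∂F := by
    rw [← integral_add (aux_integrable_inner hY2 hφF) (aux_integrable_inner hY2 hψF)]
    congr 1
    funext ω
    rw [inner_add_right]
  have hQ : ∫ ω, ‖φ ω.1.1 + ψ ω.1.2‖ ^ 2 ∂F = ∫ x : XSp M₁ M₂, ‖φ x.1 + ψ x.2‖ ^ 2 ∂ν :=
    integral_comp_fst hFfst
      ((((hAmeas φ hφ).comp measurable_fst).add
        ((hBmeas ψ hψ).comp measurable_snd)).norm.pow_const 2).aestronglyMeasurable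
  have hexp : ∫ ω, ‖ω.2 - (1:ℝ) • (φ ω.1.1 + ψ ω.1.2)‖ ^ 2 ∂F
      = ∫ ω, ‖ω.2‖ ^ 2 ∂F - 2 * 1 * ∫ ω, ⟪ω.2, φ ω.1.1 + ψ ω.1.2⟫ ∂F
        + (1:ℝ) ^ 2 * ∫ ω, ‖φ ω.1.1 + ψ ω.1.2‖ ^ 2 ∂F := aux_expand hY2 hρF 1
  simp only [one_smul, one_pow, mul_one, one_mul] at hexp
  have hmse : MSE F (fun x => φ x.1 + ψ x.2)
      = ∫ ω, ‖ω.2 - (φ ω.1.1 + ψ ω.1.2)‖ ^ 2 ∂F := rfl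
  rw [hmse, hexp, hc, hsum, hiφ, hiψ, hQ]

end AuxSpec


/-- Theorem 1, claim 1: the `C`-optimal estimator does not depend on the
choice of `F ∈ 𝓕`: minimizers of the MSE over `C = A + B` under any two `F, F' ∈ 𝓕`
coincide `ν`-almost everywhere. -/
theorem stmt_0
    (M₁ M₂ N : ℕ) (hM₁ : 0 < M₁) (hM₂ : 0 < M₂) (hN : 0 < N)
    (ν : Measure (XSp M₁ M₂)) (hνp : IsProbabilityMeasure ν)
    (hνmom : MemLp (id : XSp M₁ M₂ → XSp M₁ M₂) 2 ν)
    (A : Submodule ℝ (Euc M₁ → Euc N)) (B : Submodule ℝ (Euc M₂ → Euc N))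
    (hAmeas : ∀ φ ∈ A, Measurable φ) (hBmeas : ∀ ψ ∈ B, Measurable ψ)
    (hAL2 : ∀ φ ∈ A, MemLp φ 2 (ν.map Prod.fst))
    (hBL2 : ∀ ψ ∈ B, MemLp ψ 2 (ν.map Prod.snd))
    (φA : Euc M₁ → Euc N) (ψB : Euc M₂ → Euc N) (hφA : φA ∈ A) (hψB : ψB ∈ B)
    (c : ℝ) (hc : 0 < c)
    (hne : (SetF ν A B φA ψB c).Nonempty)
    (F F' : Measure (ΩSp M₁ M₂ N))
    (hF : F ∈ SetF ν A B φA ψB c) (hF' : F' ∈ SetF ν A B φA ψB c)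
    (ρC ρC' : XSp M₁ M₂ → Euc N)
    (hρCmem : ρC ∈ Cset A B) (hρCmem' : ρC' ∈ Cset A B)
    (hρCmin : ∀ ρ ∈ Cset A B, MSE F ρC ≤ MSE F ρ)
    (hρCmin' : ∀ ρ ∈ Cset A B, MSE F' ρC' ≤ MSE F' ρ) :
    ρC =ᵐ[ν] ρC' := by
  have key : ∀ ρ ∈ Cset A B, MSE F ρ = MSE F' ρ := by
    rintro ρ ⟨φ, hφ, ψ, hψ, rfl⟩
    rw [MSE_formula hAmeas hBmeas hAL2 hBL2 hφA hψB hF hφ hψ,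
      MSE_formula hAmeas hBmeas hAL2 hBL2 hφA hψB hF' hφ hψ]
  obtain ⟨φ₁, hφ₁, ψ₁, hψ₁, hρC1⟩ := hρCmem
  obtain ⟨φ₂, hφ₂, ψ₂, hψ₂, hρC2⟩ := hρCmem'
  subst hρC1
  subst hρC2
  have hmem1 : (fun x : XSp M₁ M₂ => φ₁ x.1 + ψ₁ x.2) ∈ Cset A B := ⟨φ₁, hφ₁, ψ₁, hψ₁, rfl⟩
  have hmem2 : (fun x : XSp M₁ M₂ => φ₂ x.1 + ψ₂ x.2) ∈ Cset A B := ⟨φ₂, hφ₂, ψ₂, hψ₂, rfl⟩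
  have hm1 : MSE F (fun x => φ₁ x.1 + ψ₁ x.2) ≤ MSE F (fun x => φ₂ x.1 + ψ₂ x.2) :=
    hρCmin _ hmem2
  have hm2 : MSE F (fun x => φ₂ x.1 + ψ₂ x.2) ≤ MSE F (fun x => φ₁ x.1 + ψ₁ x.2) := by
    calc MSE F (fun x => φ₂ x.1 + ψ₂ x.2) = MSE F' (fun x => φ₂ x.1 + ψ₂ x.2) := key _ hmem2
      _ ≤ MSE F' (fun x => φ₁ x.1 + ψ₁ x.2) := hρCmin' _ hmem1
      _ = MSE F (fun x => φ₁ x.1 + ψ₁ x.2) := (key _ hmem1).symm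
  have hFfst := hF.2.1
  have hY2 := hF.2.2.1
  -- L² facts under F
  have hφ₁F : MemLp (fun ω : ΩSp M₁ M₂ N => φ₁ ω.1.1) 2 F :=
    memL2_comp1 hFfst (hAmeas _ hφ₁) (hAL2 _ hφ₁)
  have hψ₁F : MemLp (fun ω : ΩSp M₁ M₂ N => ψ₁ ω.1.2) 2 F :=
    memL2_comp2 hFfst (hBmeas _ hψ₁) (hBL2 _ hψ₁)
  have hφ₂F : MemLp (fun ω : ΩSp M₁ M₂ N => φ₂ ω.1.1) 2 F :=
    memL2_comp1 hFfst (hAmeas _ hφ₂) (hAL2 _ hφ₂)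
  have hψ₂F : MemLp (fun ω : ΩSp M₁ M₂ N => ψ₂ ω.1.2) 2 F :=
    memL2_comp2 hFfst (hBmeas _ hψ₂) (hBL2 _ hψ₂)
  have hu : MemLp (fun ω : ΩSp M₁ M₂ N => ω.2 - (φ₁ ω.1.1 + ψ₁ ω.1.2)) 2 F :=
    hY2.sub (hφ₁F.add hψ₁F)
  have hv : MemLp (fun ω : ΩSp M₁ M₂ N => ω.2 - (φ₂ ω.1.1 + ψ₂ ω.1.2)) 2 F :=
    hY2.sub (hφ₂F.add hψ₂F)
  -- the midpoint estimator
  have hmidmem : (fun x : XSp M₁ M₂ =>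
      ((2:ℝ)⁻¹ • (φ₁ + φ₂)) x.1 + ((2:ℝ)⁻¹ • (ψ₁ + ψ₂)) x.2) ∈ Cset A B :=
    ⟨_, A.smul_mem _ (A.add_mem hφ₁ hφ₂), _, B.smul_mem _ (B.add_mem hψ₁ hψ₂), rfl⟩
  have hmid := hρCmin _ hmidmem
  have hpar : ∫ ω : ΩSp M₁ M₂ N,
        ‖(2:ℝ)⁻¹ • ((ω.2 - (φ₁ ω.1.1 + ψ₁ ω.1.2)) + (ω.2 - (φ₂ ω.1.1 + ψ₂ ω.1.2)))‖ ^ 2 ∂F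
      = ((∫ ω : ΩSp M₁ M₂ N, ‖ω.2 - (φ₁ ω.1.1 + ψ₁ ω.1.2)‖ ^ 2 ∂F)
          + ∫ ω : ΩSp M₁ M₂ N, ‖ω.2 - (φ₂ ω.1.1 + ψ₂ ω.1.2)‖ ^ 2 ∂F) / 2
        - 4⁻¹ * ∫ ω : ΩSp M₁ M₂ N,
            ‖(ω.2 - (φ₁ ω.1.1 + ψ₁ ω.1.2)) - (ω.2 - (φ₂ ω.1.1 + ψ₂ ω.1.2))‖ ^ 2 ∂F :=
    aux_parallelogram hu hv
  have hmse_mid : MSE F (fun x : XSp M₁ M₂ =>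
        ((2:ℝ)⁻¹ • (φ₁ + φ₂)) x.1 + ((2:ℝ)⁻¹ • (ψ₁ + ψ₂)) x.2)
      = ∫ ω : ΩSp M₁ M₂ N,
          ‖(2:ℝ)⁻¹ • ((ω.2 - (φ₁ ω.1.1 + ψ₁ ω.1.2)) + (ω.2 - (φ₂ ω.1.1 + ψ₂ ω.1.2)))‖ ^ 2 ∂F := by
    simp only [MSE, Pi.smul_apply, Pi.add_apply]
    congr 1
    funext ω
    congr 1
    congr 1
    module
  have he1 : MSE F (fun x : XSp M₁ M₂ => φ₁ x.1 + ψ₁ x.2)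
      = ∫ ω : ΩSp M₁ M₂ N, ‖ω.2 - (φ₁ ω.1.1 + ψ₁ ω.1.2)‖ ^ 2 ∂F := rfl
  have he2 : MSE F (fun x : XSp M₁ M₂ => φ₂ x.1 + ψ₂ x.2)
      = ∫ ω : ΩSp M₁ M₂ N, ‖ω.2 - (φ₂ ω.1.1 + ψ₂ ω.1.2)‖ ^ 2 ∂F := rfl
  set D := ∫ ω : ΩSp M₁ M₂ N,
      ‖(ω.2 - (φ₁ ω.1.1 + ψ₁ ω.1.2)) - (ω.2 - (φ₂ ω.1.1 + ψ₂ ω.1.2))‖ ^ 2 ∂F with hD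
  have hDnonneg : 0 ≤ D := integral_nonneg fun ω => sq_nonneg _
  have hDle : D ≤ 0 := by
    rw [hmse_mid, hpar, ← he1, ← he2] at hmid
    linarith
  have hD0 : D = 0 := le_antisymm hDle hDnonneg
  -- rewrite D as a ν-integral
  have hDpt : ∀ ω : ΩSp M₁ M₂ N,
      (ω.2 - (φ₁ ω.1.1 + ψ₁ ω.1.2)) - (ω.2 - (φ₂ ω.1.1 + ψ₂ ω.1.2))
        = (φ₂ ω.1.1 + ψ₂ ω.1.2) - (φ₁ ω.1.1 + ψ₁ ω.1.2) := fun ω => by abel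
  have hgm : AEStronglyMeasurable
      (fun x : XSp M₁ M₂ => ‖(φ₂ x.1 + ψ₂ x.2) - (φ₁ x.1 + ψ₁ x.2)‖ ^ 2) ν :=
    (((((hAmeas _ hφ₂).comp measurable_fst).add ((hBmeas _ hψ₂).comp measurable_snd)).sub
      (((hAmeas _ hφ₁).comp measurable_fst).add
        ((hBmeas _ hψ₁).comp measurable_snd))).norm.pow_const 2).aestronglyMeasurable
  have hDν : D = ∫ x : XSp M₁ M₂, ‖(φ₂ x.1 + ψ₂ x.2) - (φ₁ x.1 + ψ₁ x.2)‖ ^ 2 ∂ν := by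
    rw [hD]
    rw [show (fun ω : ΩSp M₁ M₂ N =>
        ‖(ω.2 - (φ₁ ω.1.1 + ψ₁ ω.1.2)) - (ω.2 - (φ₂ ω.1.1 + ψ₂ ω.1.2))‖ ^ 2)
      = fun ω : ΩSp M₁ M₂ N => ‖(φ₂ ω.1.1 + ψ₂ ω.1.2) - (φ₁ ω.1.1 + ψ₁ ω.1.2)‖ ^ 2 from
        funext fun ω => by rw [hDpt ω]]
    exact integral_comp_fst hFfst hgm
  -- integrability over ν
  have hΔν : MemLp (fun x : XSp M₁ M₂ => (φ₂ x.1 + ψ₂ x.2) - (φ₁ x.1 + ψ₁ x.2)) 2 ν :=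
    ((memL2_nu1 (hAmeas _ hφ₂) (hAL2 _ hφ₂)).add
      (memL2_nu2 (hBmeas _ hψ₂) (hBL2 _ hψ₂))).sub
      ((memL2_nu1 (hAmeas _ hφ₁) (hAL2 _ hφ₁)).add
        (memL2_nu2 (hBmeas _ hψ₁) (hBL2 _ hψ₁)))
  have hint : Integrable
      (fun x : XSp M₁ M₂ => ‖(φ₂ x.1 + ψ₂ x.2) - (φ₁ x.1 + ψ₁ x.2)‖ ^ 2) ν :=
    aux_integrable_norm_sq hΔν
  have hzero : (fun x : XSp M₁ M₂ => ‖(φ₂ x.1 + ψ₂ x.2) - (φ₁ x.1 + ψ₁ x.2)‖ ^ 2) =ᵐ[ν] 0 :=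
    (integral_eq_zero_iff_of_nonneg (fun x => sq_nonneg _) hint).mp (by rw [← hDν]; exact hD0)
  filter_upwards [hzero] with x hx
  have hx' : ‖(φ₂ x.1 + ψ₂ x.2) - (φ₁ x.1 + ψ₁ x.2)‖ ^ 2 = 0 := hx
  have := pow_eq_zero_iff two_ne_zero |>.mp hx'
  have h0 : (φ₂ x.1 + ψ₂ x.2) - (φ₁ x.1 + ψ₁ x.2) = 0 := norm_eq_zero.mp this
  have := sub_eq_zero.mp h0
  simpa using this.symm
end
end

section
/- The family 𝓕 is closed under reflection of Y about ρ_C: if (X₁,X₂,Y) has distribution F ∈ 𝓕, then the distribution of (X₁, X₂, 2ρ_C(X₁,X₂) − Y) also belongs to 𝓕. In particular, the A-optimal estimator of 2ρ_C(X₁,X₂)−Y from X₁ is φ_A, the B-optimal estimator from X₂ is ψ_B, and E‖2ρ_C(X₁,X₂)−Y‖² = c. -/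
open MeasureTheory

noncomputable section

local notation "⟪" x ", " y "⟫" => @inner ℝ _ _ x y

variable {α : Type*} [MeasurableSpace α] {μ : Measure α} {k : ℕ}
  {E : Type*} [NormedAddCommGroup E] [InnerProductSpace ℝ E]

lemma my_inner_integrable {u v : α → E} (hu : MemLp u 2 μ) (hv : MemLp v 2 μ) :
    Integrable (fun ω => ⟪u ω, v ω⟫) μ := by
  have h := L2.integrable_inner (𝕜 := ℝ) (hu.toLp u) (hv.toLp v)
  refine h.congr ?_
  filter_upwards [hu.coeFn_toLp, hv.coeFn_toLp] with ω h1 h2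
  rw [h1, h2]

lemma my_sq_integrable {u : α → E} (hu : MemLp u 2 μ) :
    Integrable (fun ω => ‖u ω‖ ^ 2) μ :=
  (memLp_two_iff_integrable_sq_norm hu.aestronglyMeasurable).mp hu

lemma my_expand {u v : α → E} (hu : MemLp u 2 μ) (hv : MemLp v 2 μ) :
    ∫ ω, ‖u ω - v ω‖ ^ 2 ∂μ
      = ∫ ω, ‖u ω‖ ^ 2 ∂μ - 2 * ∫ ω, ⟪u ω, v ω⟫ ∂μ + ∫ ω, ‖v ω‖ ^ 2 ∂μ := by
  have h1 : ∀ ω, ‖u ω - v ω‖ ^ 2 = ‖u ω‖ ^ 2 - 2 * ⟪u ω, v ω⟫ + ‖v ω‖ ^ 2 :=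
    fun ω => norm_sub_sq_real _ _
  simp_rw [h1]
  have i1 : Integrable (fun ω => ‖u ω‖ ^ 2) μ := my_sq_integrable hu
  have i2 : Integrable (fun ω => 2 * ⟪u ω, v ω⟫) μ := (my_inner_integrable hu hv).const_mul 2
  have i3 : Integrable (fun ω => ‖v ω‖ ^ 2) μ := my_sq_integrable hv
  have i12 : Integrable (fun ω => ‖u ω‖ ^ 2 - 2 * ⟪u ω, v ω⟫) μ := i1.sub i2
  rw [integral_add i12 i3, integral_sub i1 i2, integral_const_mul]

lemma my_quad_zero {a b : ℝ} (hb : 0 ≤ b) (h : ∀ t : ℝ, 0 ≤ t ^ 2 * b - 2 * t * a) :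
    a = 0 := by
  rcases hb.eq_or_lt with hb0 | hb0
  · have h1 := h 1
    have h2 := h (-1)
    nlinarith
  · have h1 := h (a / b)
    have e : a / b * b = a := div_mul_cancel₀ a (ne_of_gt hb0)
    nlinarith [sq_nonneg a, sq_nonneg (a / b)]

lemma my_ortho {Y g h : α → E} (hY : MemLp Y 2 μ) (hg : MemLp g 2 μ) (hh : MemLp h 2 μ)
    (hmin : ∀ t : ℝ, ∫ ω, ‖Y ω - g ω‖ ^ 2 ∂μ ≤ ∫ ω, ‖Y ω - (g ω + t • h ω)‖ ^ 2 ∂μ) :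
    ∫ ω, ⟪Y ω - g ω, h ω⟫ ∂μ = 0 := by
  set u : α → E := fun ω => Y ω - g ω with hu_def
  have hu : MemLp u 2 μ := hY.sub hg
  set a : ℝ := ∫ ω, ⟪u ω, h ω⟫ ∂μ
  set b : ℝ := ∫ ω, ‖h ω‖ ^ 2 ∂μ with hb_def
  have hbnn : 0 ≤ b := integral_nonneg fun ω => sq_nonneg _
  refine my_quad_zero hbnn fun t => ?_
  have hth : MemLp (fun ω => t • h ω) 2 μ := hh.const_smul t
  have key : ∫ ω, ‖Y ω - (g ω + t • h ω)‖ ^ 2 ∂μ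
      = ∫ ω, ‖u ω‖ ^ 2 ∂μ - 2 * (t * a) + t ^ 2 * b := by
    have e1 : ∀ ω, Y ω - (g ω + t • h ω) = u ω - t • h ω := fun ω => sub_add_eq_sub_sub _ _ _
    simp_rw [e1]
    rw [my_expand hu hth]
    simp_rw [real_inner_smul_right, norm_smul, mul_pow, Real.norm_eq_abs, sq_abs,
      integral_const_mul]
    rfl
  have hm := hmin t
  rw [key] at hm
  have : ∫ ω, ‖Y ω - g ω‖ ^ 2 ∂μ = ∫ ω, ‖u ω‖ ^ 2 ∂μ := rfl
  rw [this] at hm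
  linarith

lemma my_refl_min {Y c g w : α → E}
    (hY : MemLp Y 2 μ) (hc : MemLp c 2 μ) (hg : MemLp g 2 μ) (hw : MemLp w 2 μ)
    (h1 : ∫ ω, ⟪Y ω - c ω, w ω⟫ ∂μ = 0)
    (h2 : ∫ ω, ⟪Y ω - g ω, w ω⟫ ∂μ = 0) :
    ∫ ω, ‖(2 : ℝ) • c ω - Y ω - g ω‖ ^ 2 ∂μ
      ≤ ∫ ω, ‖(2 : ℝ) • c ω - Y ω - (g ω + w ω)‖ ^ 2 ∂μ := by
  set u : α → E := fun ω => (2 : ℝ) • c ω - Y ω - g ω with hu_def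
  have hu : MemLp u 2 μ := ((hc.const_smul (2:ℝ)).sub hY).sub hg
  have e1 : ∀ ω, (2 : ℝ) • c ω - Y ω - (g ω + w ω) = u ω - w ω := by
    intro ω; simp only [hu_def]; abel
  have cross : ∫ ω, ⟪u ω, w ω⟫ ∂μ = 0 := by
    have e2 : ∀ ω, ⟪u ω, w ω⟫
        = ⟪Y ω - g ω, w ω⟫ - 2 * ⟪Y ω - c ω, w ω⟫ := by
      intro ω
      have e3 : u ω = (Y ω - g ω) - (2:ℝ) • (Y ω - c ω) := by
        simp only [hu_def]; module
      rw [e3, inner_sub_left, real_inner_smul_left]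
    simp_rw [e2]
    have j1 : Integrable (fun ω => ⟪Y ω - g ω, w ω⟫) μ := my_inner_integrable (hY.sub hg) hw
    have j2 : Integrable (fun ω => 2 * ⟪Y ω - c ω, w ω⟫) μ :=
      (my_inner_integrable (hY.sub hc) hw).const_mul 2
    rw [integral_sub j1 j2, integral_const_mul, h1, h2]
    ring
  have hwnn : 0 ≤ ∫ ω, ‖w ω‖ ^ 2 ∂μ := integral_nonneg fun ω => sq_nonneg _
  calc ∫ ω, ‖u ω‖ ^ 2 ∂μ ≤ ∫ ω, ‖u ω‖ ^ 2 ∂μ - 2 * ∫ ω, ⟪u ω, w ω⟫ ∂μ + ∫ ω, ‖w ω‖ ^ 2 ∂μ := by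
        rw [cross]; linarith
    _ = ∫ ω, ‖u ω - w ω‖ ^ 2 ∂μ := (my_expand hu hw).symm
    _ = ∫ ω, ‖(2 : ℝ) • c ω - Y ω - (g ω + w ω)‖ ^ 2 ∂μ := by simp_rw [e1]
set_option maxHeartbeats 2000000 in
/-- the family `𝓕` is closed under reflection of `Y` about `ρ_C`:
if `((X₁,X₂),Y) ∼ F ∈ 𝓕`, then the law of `((X₁,X₂), 2ρ_C(X₁,X₂) − Y)` also belongs to `𝓕`
(in particular its `A`-optimal estimator from `X₁` is `φ_A`, its `B`-optimal estimator from
`X₂` is `ψ_B`, and its second moment is `c`). -/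
theorem stmt_4
    (M₁ M₂ N : ℕ) (hM₁ : 0 < M₁) (hM₂ : 0 < M₂) (hN : 0 < N)
    (ν : Measure (XSp M₁ M₂)) (hνp : IsProbabilityMeasure ν)
    (hνmom : MemLp (id : XSp M₁ M₂ → XSp M₁ M₂) 2 ν)
    (A : Submodule ℝ (Euc M₁ → Euc N)) (B : Submodule ℝ (Euc M₂ → Euc N))
    (hAmeas : ∀ φ ∈ A, Measurable φ) (hBmeas : ∀ ψ ∈ B, Measurable ψ)
    (hAL2 : ∀ φ ∈ A, MemLp φ 2 (ν.map Prod.fst))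
    (hBL2 : ∀ ψ ∈ B, MemLp ψ 2 (ν.map Prod.snd))
    (φA : Euc M₁ → Euc N) (ψB : Euc M₂ → Euc N) (hφA : φA ∈ A) (hψB : ψB ∈ B)
    (c : ℝ) (hc : 0 < c)
    (hne : (SetF ν A B φA ψB c).Nonempty)
    (F : Measure (ΩSp M₁ M₂ N)) (hF : F ∈ SetF ν A B φA ψB c)
    (ρC : XSp M₁ M₂ → Euc N) (hρCmem : ρC ∈ Cset A B)
    (hρCmin : ∀ ρ ∈ Cset A B, MSE F ρC ≤ MSE F ρ) :
    F.map (fun ω => (ω.1, (2 : ℝ) • ρC ω.1 - ω.2)) ∈ SetF ν A B φA ψB c := by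
  classical
  obtain ⟨hFp, hFfst, hY2, hAopt, hBopt, hYsq⟩ := hF
  obtain ⟨φ0, hφ0A, ψ0, hψ0B, hρCdef⟩ := hρCmem
  haveI := hFp
  have hφ0m : Measurable φ0 := hAmeas φ0 hφ0A
  have hψ0m : Measurable ψ0 := hBmeas ψ0 hψ0B
  have hρCm : Measurable ρC := by
    rw [hρCdef]; exact (hφ0m.comp measurable_fst).add (hψ0m.comp measurable_snd)
  set T : ΩSp M₁ M₂ N → ΩSp M₁ M₂ N := fun ω => (ω.1, (2:ℝ) • ρC ω.1 - ω.2) with hT_def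
  have hTm : Measurable T :=
    measurable_fst.prodMk (((hρCm.comp measurable_fst).const_smul (2:ℝ)).sub measurable_snd)
  have hmap1 : ν.map Prod.fst = F.map (fun ω : ΩSp M₁ M₂ N => ω.1.1) := by
    rw [← hFfst, Measure.map_map measurable_fst measurable_fst]; rfl
  have hmap2 : ν.map Prod.snd = F.map (fun ω : ΩSp M₁ M₂ N => ω.1.2) := by
    rw [← hFfst, Measure.map_map measurable_snd measurable_fst]; rfl
  have memA : ∀ φ ∈ A, MemLp (fun ω : ΩSp M₁ M₂ N => φ ω.1.1) 2 F := by
    intro φ hφ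
    have h1 := hAL2 φ hφ
    rw [hmap1] at h1
    exact (memLp_map_measure_iff
      (hAmeas φ hφ).stronglyMeasurable.aestronglyMeasurable
      (measurable_fst.comp measurable_fst).aemeasurable).mp h1
  have memB : ∀ ψ ∈ B, MemLp (fun ω : ΩSp M₁ M₂ N => ψ ω.1.2) 2 F := by
    intro ψ hψ
    have h1 := hBL2 ψ hψ
    rw [hmap2] at h1
    exact (memLp_map_measure_iff
      (hBmeas ψ hψ).stronglyMeasurable.aestronglyMeasurable
      (measurable_snd.comp measurable_fst).aemeasurable).mp h1
  have hρCF : MemLp (fun ω : ΩSp M₁ M₂ N => ρC ω.1) 2 F := by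
    rw [hρCdef]; exact (memA φ0 hφ0A).add (memB ψ0 hψ0B)
  have memC : ∀ ρ ∈ Cset A B, MemLp (fun ω : ΩSp M₁ M₂ N => ρ ω.1) 2 F := by
    rintro ρ ⟨φ1, h1, ψ1, h2, rfl⟩
    exact (memA _ h1).add (memB _ h2)
  have hC_ortho : ∀ ρ ∈ Cset A B, ∫ ω, ⟪ω.2 - ρC ω.1, ρ ω.1⟫ ∂F = 0 := by
    intro ρ hρ
    refine my_ortho hY2 hρCF (memC ρ hρ) fun t => ?_
    have hmem : (fun x => ρC x + t • ρ x) ∈ Cset A B := by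
      obtain ⟨φ1, h1, ψ1, h2, rfl⟩ := hρ
      refine ⟨φ0 + t • φ1, A.add_mem hφ0A (A.smul_mem t h1),
        ψ0 + t • ψ1, B.add_mem hψ0B (B.smul_mem t h2), ?_⟩
      funext x
      simp only [hρCdef, Pi.add_apply, Pi.smul_apply, smul_add]
      abel
    have h9 := hρCmin _ hmem
    simp only [MSE] at h9
    exact h9
  have hA_ortho : ∀ h ∈ A, ∫ ω, ⟪ω.2 - φA ω.1.1, h ω.1.1⟫ ∂F = 0 := by
    intro h hh
    refine my_ortho hY2 (memA φA hφA) (memA h hh) fun t => ?_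
    have h9 := hAopt (φA + t • h) (A.add_mem hφA (A.smul_mem t hh))
    simp only [MSE, Pi.add_apply, Pi.smul_apply] at h9
    exact h9
  have hB_ortho : ∀ h ∈ B, ∫ ω, ⟪ω.2 - ψB ω.1.2, h ω.1.2⟫ ∂F = 0 := by
    intro h hh
    refine my_ortho hY2 (memB ψB hψB) (memB h hh) fun t => ?_
    have h9 := hBopt (ψB + t • h) (B.add_mem hψB (B.smul_mem t hh))
    simp only [MSE, Pi.add_apply, Pi.smul_apply] at h9
    exact h9
  have hmemCA : ∀ h ∈ A, (fun x : XSp M₁ M₂ => h x.1) ∈ Cset A B :=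
    fun h hh => ⟨h, hh, 0, B.zero_mem, by funext x; simp⟩
  have hmemCB : ∀ h ∈ B, (fun x : XSp M₁ M₂ => h x.2) ∈ Cset A B :=
    fun h hh => ⟨0, A.zero_mem, h, hh, by funext x; simp⟩
  have hmapint : ∀ ρ : XSp M₁ M₂ → Euc N, Measurable ρ →
      MSE (F.map T) ρ = ∫ ω, ‖(2:ℝ) • ρC ω.1 - ω.2 - ρ ω.1‖ ^ 2 ∂F := by
    intro ρ hρ
    show ∫ ω, ‖ω.2 - ρ ω.1‖ ^ 2 ∂(F.map T) = _
    have hsm : AEStronglyMeasurable (fun ω : ΩSp M₁ M₂ N => ‖ω.2 - ρ ω.1‖ ^ 2) (F.map T) :=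
      ((measurable_snd.sub (hρ.comp measurable_fst)).norm.pow_const 2).aestronglyMeasurable
    rw [integral_map hTm.aemeasurable hsm]
  refine ⟨Measure.isProbabilityMeasure_map hTm.aemeasurable, ?_, ?_, ?_, ?_, ?_⟩
  · rw [Measure.map_map measurable_fst hTm]
    exact hFfst
  · have h2 : MemLp (fun ω : ΩSp M₁ M₂ N => (2:ℝ) • ρC ω.1 - ω.2) 2 F :=
      (hρCF.const_smul (2:ℝ)).sub hY2
    exact (memLp_map_measure_iff measurable_snd.aestronglyMeasurable hTm.aemeasurable).mpr h2
  · intro φ hφ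
    rw [hmapint (fun x => φA x.1) ((hAmeas φA hφA).comp measurable_fst),
      hmapint (fun x => φ x.1) ((hAmeas φ hφ).comp measurable_fst)]
    have hsub : φ - φA ∈ A := A.sub_mem hφ hφA
    have key := my_refl_min (w := fun ω : ΩSp M₁ M₂ N => φ ω.1.1 - φA ω.1.1)
      hY2 hρCF (memA φA hφA) ((memA φ hφ).sub (memA φA hφA))
      (hC_ortho (fun x => (φ - φA) x.1) (hmemCA _ hsub)) (hA_ortho (φ - φA) hsub)
    refine key.trans_eq (integral_congr_ae (Filter.Eventually.of_forall fun ω => ?_))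
    beta_reduce
    rw [show φA ω.1.1 + (φ ω.1.1 - φA ω.1.1) = φ ω.1.1 from by abel]
  · intro ψ hψ
    rw [hmapint (fun x => ψB x.2) ((hBmeas ψB hψB).comp measurable_snd),
      hmapint (fun x => ψ x.2) ((hBmeas ψ hψ).comp measurable_snd)]
    have hsub : ψ - ψB ∈ B := B.sub_mem hψ hψB
    have key := my_refl_min (w := fun ω : ΩSp M₁ M₂ N => ψ ω.1.2 - ψB ω.1.2)
      hY2 hρCF (memB ψB hψB) ((memB ψ hψ).sub (memB ψB hψB))
      (hC_ortho (fun x => (ψ - ψB) x.2) (hmemCB _ hsub)) (hB_ortho (ψ - ψB) hsub)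
    refine key.trans_eq (integral_congr_ae (Filter.Eventually.of_forall fun ω => ?_))
    beta_reduce
    rw [show ψB ω.1.2 + (ψ ω.1.2 - ψB ω.1.2) = ψ ω.1.2 from by abel]
  · rw [integral_map hTm.aemeasurable (measurable_snd.norm.pow_const 2).aestronglyMeasurable]
    have hρCmem' : ρC ∈ Cset A B := ⟨φ0, hφ0A, ψ0, hψ0B, hρCdef⟩
    have ho := hC_ortho ρC hρCmem'
    have j1 : Integrable (fun ω : ΩSp M₁ M₂ N => ⟪ω.2, ρC ω.1⟫) F :=
      my_inner_integrable hY2 hρCF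
    have j2 : Integrable (fun ω : ΩSp M₁ M₂ N => ⟪ρC ω.1, ρC ω.1⟫) F :=
      my_inner_integrable hρCF hρCF
    have e2 : ∀ ω : ΩSp M₁ M₂ N,
        ⟪ω.2 - ρC ω.1, ρC ω.1⟫ = ⟪ω.2, ρC ω.1⟫ - ⟪ρC ω.1, ρC ω.1⟫ :=
      fun ω => inner_sub_left _ _ _
    simp_rw [e2] at ho
    rw [integral_sub j1 j2, sub_eq_zero] at ho
    have hv2 : MemLp (fun ω : ΩSp M₁ M₂ N => (2:ℝ) • ρC ω.1) 2 F := hρCF.const_smul (2:ℝ)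
    have hexp := my_expand (μ := F) hY2 hv2
    have e3 : ∫ ω, ‖(T ω).2‖ ^ 2 ∂F = ∫ ω, ‖ω.2 - (2:ℝ) • ρC ω.1‖ ^ 2 ∂F :=
      integral_congr_ae (Filter.Eventually.of_forall fun ω => by
        show ‖(2:ℝ) • ρC ω.1 - ω.2‖ ^ 2 = _
        rw [norm_sub_rev])
    rw [e3, hexp]
    have e4 : ∫ ω, ⟪ω.2, (2:ℝ) • ρC ω.1⟫ ∂F = 2 * ∫ ω, ⟪ω.2, ρC ω.1⟫ ∂F := by
      simp_rw [real_inner_smul_right, integral_const_mul]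
    have e5 : ∫ ω, ‖(2:ℝ) • ρC ω.1‖ ^ 2 ∂F = 4 * ∫ ω, ‖ρC ω.1‖ ^ 2 ∂F := by
      have : ∀ ω : ΩSp M₁ M₂ N, ‖(2:ℝ) • ρC ω.1‖ ^ 2 = 4 * ‖ρC ω.1‖ ^ 2 := fun ω => by
        rw [norm_smul]; simp; ring
      simp_rw [this, integral_const_mul]
    have e6 : ∫ ω, ⟪ρC ω.1, ρC ω.1⟫ ∂F = ∫ ω, ‖ρC ω.1‖ ^ 2 ∂F := by
      simp_rw [real_inner_self_eq_norm_sq]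
    rw [e4, e5, ho, e6, hYsq]
    ring
end
end

section
/- Theorem 2 (multi-domain minimax-regret prediction): the minimizer over all square-ν-integrable Borel functions ρ:ℝ^{M₁}×ℝ^{M₂}→ℝ^N of the worst-case regret sup_{F∈𝓕} REG(F,ρ) is the C-optimal estimator ρ_C; that is, for every such ρ, sup_{F∈𝓕} REG(F,ρ_C) ≤ sup_{F∈𝓕} REG(F,ρ), so the minimax-regret solution coincides with the minimax-MSE solution ρ_M = ρ_C. -/
open MeasureTheory
open scoped RealInnerProductSpace ENNReal

noncomputable section

namespace Stmt8Aux

variable {α : Type*} [MeasurableSpace α] {μ : Measure α}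
variable {E : Type*} [NormedAddCommGroup E] [InnerProductSpace ℝ E]

lemma meml2_int_norm_sq {f : α → E} (hf : MemLp f 2 μ) :
    Integrable (fun x => ‖f x‖ ^ 2) μ := by
  have h := hf.integrable_norm_rpow (by norm_num) (by norm_num)
  have h2 : ((2 : ℝ≥0∞).toReal) = (2 : ℝ) := by norm_num
  rw [h2] at h
  simpa [Real.rpow_natCast] using h

lemma meml2_int_inner {f g : α → E} (hf : MemLp f 2 μ) (hg : MemLp g 2 μ) :
    Integrable (fun x => ⟪f x, g x⟫) μ := by
  have hmeas : AEStronglyMeasurable (fun x => ⟪f x, g x⟫) μ :=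
    AEStronglyMeasurable.inner hf.aestronglyMeasurable hg.aestronglyMeasurable
  refine ((meml2_int_norm_sq hf).add (meml2_int_norm_sq hg)).mono' hmeas ?_
  filter_upwards with x
  have h1 : |⟪f x, g x⟫| ≤ ‖f x‖ * ‖g x‖ := abs_real_inner_le_norm _ _
  have h2 : ‖f x‖ * ‖g x‖ ≤ ‖f x‖ ^ 2 + ‖g x‖ ^ 2 := by
    nlinarith [sq_nonneg (‖f x‖ - ‖g x‖), norm_nonneg (f x), norm_nonneg (g x)]
  calc ‖⟪f x, g x⟫‖ = |⟪f x, g x⟫| := rfl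
    _ ≤ ‖f x‖ ^ 2 + ‖g x‖ ^ 2 := le_trans h1 h2

lemma int_norm_sub_sq {f g : α → E} (hf : MemLp f 2 μ) (hg : MemLp g 2 μ) :
    ∫ x, ‖f x - g x‖ ^ 2 ∂μ
      = ∫ x, ‖f x‖ ^ 2 ∂μ - 2 * ∫ x, ⟪f x, g x⟫ ∂μ + ∫ x, ‖g x‖ ^ 2 ∂μ := by
  have hpt : ∀ x, ‖f x - g x‖ ^ 2 = ‖f x‖ ^ 2 - 2 * ⟪f x, g x⟫ + ‖g x‖ ^ 2 := fun x =>
    norm_sub_sq_real _ _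
  have ia : Integrable (fun x => ‖f x‖ ^ 2 - 2 * ⟪f x, g x⟫) μ :=
    (meml2_int_norm_sq hf).sub ((meml2_int_inner hf hg).const_mul 2)
  rw [integral_congr_ae (Filter.Eventually.of_forall hpt),
    integral_add ia (meml2_int_norm_sq hg),
    integral_sub (meml2_int_norm_sq hf) ((meml2_int_inner hf hg).const_mul 2),
    integral_const_mul 2 _]

lemma inner_int_eq_zero_of_min {f g : α → E} (hf : MemLp f 2 μ) (hg : MemLp g 2 μ)
    (h : ∀ t : ℝ, ∫ x, ‖f x‖ ^ 2 ∂μ ≤ ∫ x, ‖f x - t • g x‖ ^ 2 ∂μ) :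
    ∫ x, ⟪f x, g x⟫ ∂μ = 0 := by
  set L := ∫ x, ⟪f x, g x⟫ ∂μ with hL
  set Q := ∫ x, ‖g x‖ ^ 2 ∂μ with hQdef
  have hQ : 0 ≤ Q := integral_nonneg fun x => sq_nonneg _
  have key : ∀ t : ℝ, 2 * (t * L) ≤ t ^ 2 * Q := by
    intro t
    have h1 := h t
    have hg' : MemLp (fun x => t • g x) 2 μ := hg.const_smul t
    rw [int_norm_sub_sq hf hg'] at h1
    have e1 : ∫ x, ⟪f x, t • g x⟫ ∂μ = t * L := by
      rw [hL]
      simp_rw [real_inner_smul_right]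
      exact integral_const_mul t _
    have e2 : ∫ x, ‖t • g x‖ ^ 2 ∂μ = t ^ 2 * Q := by
      rw [hQdef]
      simp_rw [norm_smul, mul_pow, Real.norm_eq_abs, sq_abs]
      exact integral_const_mul (t ^ 2) _
    rw [e1, e2] at h1
    linarith
  have hQ1 : (0 : ℝ) < Q + 1 := by linarith
  set u := L / (Q + 1) with hu
  have hL' : L = u * (Q + 1) := by
    rw [hu]; field_simp
  have h1 := key u
  rw [hL'] at h1
  have h2 : u ^ 2 = 0 := by
    apply le_antisymm _ (sq_nonneg u)
    nlinarith
  have huz : u = 0 := by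
    exact pow_eq_zero_iff two_ne_zero |>.mp h2
  rw [hL', huz, zero_mul]

lemma factor_comap_fst {β γ E : Type*} [MeasurableSpace β] [MeasurableSpace γ] [MeasurableSpace E]
    [MeasurableSingletonClass E] [Nonempty γ] (m : β × γ → E)
    (hm : Measurable[MeasurableSpace.comap Prod.fst inferInstance] m) :
    ∃ g : β → E, Measurable g ∧ m = fun p => g p.1 := by
  classical
  obtain ⟨c₀⟩ := (inferInstance : Nonempty γ)
  refine ⟨fun b => m (b, c₀), ?_, ?_⟩
  · intro s hs
    obtain ⟨B, hB, hpre⟩ := hm hs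
    have key : (fun b => m (b, c₀)) ⁻¹' s = B := by
      ext b
      have h2 : ((b, c₀) ∈ m ⁻¹' s) ↔ ((b, c₀) ∈ Prod.fst ⁻¹' B) := by rw [hpre]
      simpa using h2
    rw [key]; exact hB
  · funext p
    have hs : MeasurableSet ({m p} : Set E) := measurableSet_singleton _
    obtain ⟨B, hB, hpre⟩ := hm hs
    have hp : p ∈ Prod.fst ⁻¹' B := by rw [hpre]; simp
    have hp2 : (p.1, c₀) ∈ Prod.fst ⁻¹' B := hp
    rw [hpre] at hp2
    have hfin : m (p.1, c₀) = m p := by simpa using hp2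
    exact hfin.symm

lemma parallelogram_pt (v u : E) : ‖v + u‖ ^ 2 + ‖u - v‖ ^ 2 = 2 * ‖v‖ ^ 2 + 2 * ‖u‖ ^ 2 := by
  rw [norm_add_sq_real, norm_sub_sq_real, real_inner_comm u v]; ring

/-- The reflection `(x, y) ↦ (x, 2 ρC(x) - y)`. -/
def Tmap {M₁ M₂ N : ℕ} (ρC : XSp M₁ M₂ → Euc N) : ΩSp M₁ M₂ N → ΩSp M₁ M₂ N :=
  fun ω => (ω.1, (2 : ℝ) • ρC ω.1 - ω.2)

lemma Tmap_meas {M₁ M₂ N : ℕ} {ρC : XSp M₁ M₂ → Euc N} (h : Measurable ρC) :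
    Measurable (Tmap (N := N) ρC) :=
  measurable_fst.prodMk (((h.comp measurable_fst).const_smul (2 : ℝ)).sub measurable_snd)

end Stmt8Aux

set_option maxHeartbeats 2000000 in
/-- Theorem 2, multi-domain minimax-regret prediction: the worst-case
regret over `𝓕` of the `C`-optimal estimator `ρ_C` is no larger than that of any
square-`ν`-integrable Borel estimator `ρ(X₁,X₂)`; the minimax-regret solution coincides
with the minimax-MSE solution `ρ_M = ρ_C`. -/
theorem stmt_8
    (M₁ M₂ N : ℕ) (hM₁ : 0 < M₁) (hM₂ : 0 < M₂) (hN : 0 < N)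
    (ν : Measure (XSp M₁ M₂)) (hνp : IsProbabilityMeasure ν)
    (hνmom : MemLp (id : XSp M₁ M₂ → XSp M₁ M₂) 2 ν)
    (A : Submodule ℝ (Euc M₁ → Euc N)) (B : Submodule ℝ (Euc M₂ → Euc N))
    (hAmeas : ∀ φ ∈ A, Measurable φ) (hBmeas : ∀ ψ ∈ B, Measurable ψ)
    (hAL2 : ∀ φ ∈ A, MemLp φ 2 (ν.map Prod.fst))
    (hBL2 : ∀ ψ ∈ B, MemLp ψ 2 (ν.map Prod.snd))
    (φA : Euc M₁ → Euc N) (ψB : Euc M₂ → Euc N) (hφA : φA ∈ A) (hψB : ψB ∈ B)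
    (c : ℝ) (hc : 0 < c)
    (hne : (SetF ν A B φA ψB c).Nonempty)
    (ρC : XSp M₁ M₂ → Euc N) (hρCmem : ρC ∈ Cset A B)
    (hρCmin : ∀ F ∈ SetF ν A B φA ψB c, ∀ ρ' ∈ Cset A B, MSE F ρC ≤ MSE F ρ') :
    ∀ ρ : XSp M₁ M₂ → Euc N, Measurable ρ → MemLp ρ 2 ν →
      (⨆ F ∈ SetF ν A B φA ψB c, REG F ρC) ≤ ⨆ F ∈ SetF ν A B φA ψB c, REG F ρ := by
  classical
  intro ρ hρmeas hρ2
  open Stmt8Aux in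
  obtain ⟨φ₀, hφ₀A, ψ₀, hψ₀B, hρCdef⟩ := hρCmem
  set S := SetF ν A B φA ψB c with hSdef
  have hρCmeas : Measurable ρC := by
    rw [hρCdef]
    exact ((hAmeas φ₀ hφ₀A).comp measurable_fst).add ((hBmeas ψ₀ hψ₀B).comp measurable_snd)
  -- transfer L² facts to ν
  have hAν : ∀ φ ∈ A, MemLp (fun x : XSp M₁ M₂ => φ x.1) 2 ν := by
    intro φ hφ
    exact (memLp_map_measure_iff (hAmeas φ hφ).aestronglyMeasurable
      measurable_fst.aemeasurable).mp (hAL2 φ hφ)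
  have hBν : ∀ ψ ∈ B, MemLp (fun x : XSp M₁ M₂ => ψ x.2) 2 ν := by
    intro ψ hψ
    exact (memLp_map_measure_iff (hBmeas ψ hψ).aestronglyMeasurable
      measurable_snd.aemeasurable).mp (hBL2 ψ hψ)
  have hρCν : MemLp ρC 2 ν := by
    rw [hρCdef]; exact (hAν φ₀ hφ₀A).add (hBν ψ₀ hψ₀B)
  set T : ΩSp M₁ M₂ N → ΩSp M₁ M₂ N := Stmt8Aux.Tmap ρC with hTdef
  have hT : Measurable T := Stmt8Aux.Tmap_meas hρCmeas
  have hmle : sigmaX M₁ M₂ N ≤ (inferInstance : MeasurableSpace (ΩSp M₁ M₂ N)) :=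
    measurable_iff_comap_le.mp measurable_fst
  -- the main per-F statement
  have main : ∀ F ∈ S, (F.map T ∈ S) ∧
      (2 * REG F ρC ≤ REG F ρ + REG (F.map T) ρ) := by
    intro F hFS
    obtain ⟨hP, hmap, hY2, hAmin, hBmin, hcF⟩ := id hFS
    haveI := hP
    -- L² facts over F
    have hL2F : ∀ {g : XSp M₁ M₂ → Euc N}, Measurable g → MemLp g 2 ν →
        MemLp (fun ω : ΩSp M₁ M₂ N => g ω.1) 2 F := by
      intro g hgm hg
      have h1 : MemLp g 2 (F.map Prod.fst) := by rw [hmap]; exact hg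
      exact (memLp_map_measure_iff hgm.aestronglyMeasurable
        measurable_fst.aemeasurable).mp h1
    have hYF : MemLp (fun ω : ΩSp M₁ M₂ N => ω.2) 2 F := hY2
    have hAF : ∀ φ ∈ A, MemLp (fun ω : ΩSp M₁ M₂ N => φ ω.1.1) 2 F := fun φ hφ =>
      hL2F ((hAmeas φ hφ).comp measurable_fst) (hAν φ hφ)
    have hBF : ∀ ψ ∈ B, MemLp (fun ω : ΩSp M₁ M₂ N => ψ ω.1.2) 2 F := fun ψ hψ =>
      hL2F ((hBmeas ψ hψ).comp measurable_snd) (hBν ψ hψ)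
    have hρCF : MemLp (fun ω : ΩSp M₁ M₂ N => ρC ω.1) 2 F := hL2F hρCmeas hρCν
    have hρF : MemLp (fun ω : ΩSp M₁ M₂ N => ρ ω.1) 2 F := hL2F hρmeas hρ2
    have hVA : MemLp (fun ω : ΩSp M₁ M₂ N => ω.2 - φA ω.1.1) 2 F := hYF.sub (hAF φA hφA)
    have hVB : MemLp (fun ω : ΩSp M₁ M₂ N => ω.2 - ψB ω.1.2) 2 F := hYF.sub (hBF ψB hψB)
    have hVC : MemLp (fun ω : ΩSp M₁ M₂ N => ω.2 - ρC ω.1) 2 F := hYF.sub hρCF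
    -- orthogonality relations
    have ortho1 : ∀ φ ∈ A, ∫ ω, ⟪ω.2 - φA ω.1.1, φ ω.1.1⟫ ∂F = 0 := by
      intro φ hφ
      refine Stmt8Aux.inner_int_eq_zero_of_min (hYF.sub (hAF φA hφA)) (hAF φ hφ) ?_
      intro t
      have h := hAmin (φA + t • φ) (A.add_mem hφA (A.smul_mem t hφ))
      simpa only [MSE, Pi.add_apply, Pi.smul_apply, sub_sub] using h
    have ortho2 : ∀ ψ ∈ B, ∫ ω, ⟪ω.2 - ψB ω.1.2, ψ ω.1.2⟫ ∂F = 0 := by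
      intro ψ hψ
      refine Stmt8Aux.inner_int_eq_zero_of_min (hYF.sub (hBF ψB hψB)) (hBF ψ hψ) ?_
      intro t
      have h := hBmin (ψB + t • ψ) (B.add_mem hψB (B.smul_mem t hψ))
      simpa only [MSE, Pi.add_apply, Pi.smul_apply, sub_sub] using h
    have orthoC : ∀ φ ∈ A, ∀ ψ ∈ B,
        ∫ ω, ⟪ω.2 - ρC ω.1, φ ω.1.1 + ψ ω.1.2⟫ ∂F = 0 := by
      intro φ hφ ψ hψ
      refine Stmt8Aux.inner_int_eq_zero_of_min (hYF.sub hρCF) ((hAF φ hφ).add (hBF ψ hψ)) ?_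
      intro t
      have hmem : (fun x : XSp M₁ M₂ => (φ₀ + t • φ) x.1 + (ψ₀ + t • ψ) x.2) ∈ Cset A B :=
        ⟨φ₀ + t • φ, A.add_mem hφ₀A (A.smul_mem t hφ),
          ψ₀ + t • ψ, B.add_mem hψ₀B (B.smul_mem t hψ), rfl⟩
      have h := hρCmin F hFS _ hmem
      have hre : (fun x : XSp M₁ M₂ => (φ₀ + t • φ) x.1 + (ψ₀ + t • ψ) x.2)
          = fun x => ρC x + t • (φ x.1 + ψ x.2) := by
        funext x
        simp only [hρCdef, Pi.add_apply, Pi.smul_apply, smul_add]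
        abel
      rw [hre] at h
      simpa only [MSE, sub_sub] using h
    have hρC_eq : ∀ ω : ΩSp M₁ M₂ N, φ₀ ω.1.1 + ψ₀ ω.1.2 = ρC ω.1 := by
      intro ω; rw [hρCdef]
    have hYρC : ∫ ω, ⟪ω.2 - ρC ω.1, ρC ω.1⟫ ∂F = 0 := by
      have h := orthoC φ₀ hφ₀A ψ₀ hψ₀B
      simpa only [hρC_eq] using h
    have orthoA : ∀ φ ∈ A, ∫ ω, ⟪ω.2 - ρC ω.1, φ ω.1.1⟫ ∂F = 0 := by
      intro φ hφ
      have h := orthoC φ hφ 0 B.zero_mem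
      simpa using h
    have orthoB : ∀ ψ ∈ B, ∫ ω, ⟪ω.2 - ρC ω.1, ψ ω.1.2⟫ ∂F = 0 := by
      intro ψ hψ
      have h := orthoC 0 A.zero_mem ψ hψ
      simpa using h
    have hinnerYρC : ∫ ω, ⟪ω.2, ρC ω.1⟫ ∂F = ∫ ω, ‖ρC ω.1‖ ^ 2 ∂F := by
      have h := hYρC
      have hpt : ∀ ω : ΩSp M₁ M₂ N,
          ⟪ω.2 - ρC ω.1, ρC ω.1⟫ = ⟪ω.2, ρC ω.1⟫ - ‖ρC ω.1‖ ^ 2 := by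
        intro ω
        rw [inner_sub_left, real_inner_self_eq_norm_sq]
      have i1 : Integrable (fun ω : ΩSp M₁ M₂ N => ⟪ω.2, ρC ω.1⟫) F :=
        Stmt8Aux.meml2_int_inner hYF hρCF
      have i2 : Integrable (fun ω : ΩSp M₁ M₂ N => ‖ρC ω.1‖ ^ 2) F :=
        Stmt8Aux.meml2_int_norm_sq hρCF
      rw [integral_congr_ae (Filter.Eventually.of_forall hpt), integral_sub i1 i2] at h
      linarith
    -- basic facts about F' = F.map T
    have hZ2 : MemLp (fun ω : ΩSp M₁ M₂ N => (2 : ℝ) • ρC ω.1 - ω.2) 2 F :=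
      (hρCF.const_smul (2 : ℝ)).sub hYF
    have hMSE' : ∀ g : XSp M₁ M₂ → Euc N, Measurable g →
        MSE (F.map T) g = ∫ ω, ‖(2 : ℝ) • ρC ω.1 - ω.2 - g ω.1‖ ^ 2 ∂F := by
      intro g hg
      have haesm : AEStronglyMeasurable (fun ω : ΩSp M₁ M₂ N => ‖ω.2 - g ω.1‖ ^ 2) (F.map T) :=
        ((measurable_snd.sub (hg.comp measurable_fst)).norm.pow_const 2).aestronglyMeasurable
      rw [MSE, integral_map hT.aemeasurable haesm]
      rfl
    -- crosses for minimality over A and B under F'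
    have crossA : ∀ η ∈ A,
        ∫ ω, ⟪(2 : ℝ) • ρC ω.1 - ω.2 - φA ω.1.1, η ω.1.1⟫ ∂F = 0 := by
      intro η hη
      have hpt : ∀ ω : ΩSp M₁ M₂ N,
          ⟪(2 : ℝ) • ρC ω.1 - ω.2 - φA ω.1.1, η ω.1.1⟫
            = ⟪ω.2 - ρC ω.1, η ω.1.1⟫ * (-2) + ⟪ω.2 - φA ω.1.1, η ω.1.1⟫ := by
        intro ω
        have hv : (2 : ℝ) • ρC ω.1 - ω.2 - φA ω.1.1
            = (-2 : ℝ) • (ω.2 - ρC ω.1) + (ω.2 - φA ω.1.1) := by module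
        rw [hv, inner_add_left, real_inner_smul_left]; ring
      have i1 : Integrable (fun ω : ΩSp M₁ M₂ N => ⟪ω.2 - ρC ω.1, η ω.1.1⟫) F :=
        Stmt8Aux.meml2_int_inner hVC (hAF η hη)
      have i2 : Integrable (fun ω : ΩSp M₁ M₂ N => ⟪ω.2 - φA ω.1.1, η ω.1.1⟫) F :=
        Stmt8Aux.meml2_int_inner hVA (hAF η hη)
      rw [integral_congr_ae (Filter.Eventually.of_forall hpt),
        integral_add (i1.mul_const _) i2,
        integral_mul_const, orthoA η hη, ortho1 η hη]
      ring
    have crossB : ∀ η ∈ B,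
        ∫ ω, ⟪(2 : ℝ) • ρC ω.1 - ω.2 - ψB ω.1.2, η ω.1.2⟫ ∂F = 0 := by
      intro η hη
      have hpt : ∀ ω : ΩSp M₁ M₂ N,
          ⟪(2 : ℝ) • ρC ω.1 - ω.2 - ψB ω.1.2, η ω.1.2⟫
            = ⟪ω.2 - ρC ω.1, η ω.1.2⟫ * (-2) + ⟪ω.2 - ψB ω.1.2, η ω.1.2⟫ := by
        intro ω
        have hv : (2 : ℝ) • ρC ω.1 - ω.2 - ψB ω.1.2
            = (-2 : ℝ) • (ω.2 - ρC ω.1) + (ω.2 - ψB ω.1.2) := by module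
        rw [hv, inner_add_left, real_inner_smul_left]; ring
      have i1 : Integrable (fun ω : ΩSp M₁ M₂ N => ⟪ω.2 - ρC ω.1, η ω.1.2⟫) F :=
        Stmt8Aux.meml2_int_inner hVC (hBF η hη)
      have i2 : Integrable (fun ω : ΩSp M₁ M₂ N => ⟪ω.2 - ψB ω.1.2, η ω.1.2⟫) F :=
        Stmt8Aux.meml2_int_inner hVB (hBF η hη)
      rw [integral_congr_ae (Filter.Eventually.of_forall hpt),
        integral_add (i1.mul_const _) i2,
        integral_mul_const, orthoB η hη, ortho2 η hη]
      ring
    -- membership of F.map T in S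
    have hmem' : F.map T ∈ S := by
      refine ⟨Measure.isProbabilityMeasure_map hT.aemeasurable, ?_, ?_, ?_, ?_, ?_⟩
      · rw [Measure.map_map measurable_fst hT]
        have hcomp : (Prod.fst ∘ T : ΩSp M₁ M₂ N → XSp M₁ M₂) = Prod.fst := by
          funext ω; rfl
        rw [hcomp, hmap]
      · exact (memLp_map_measure_iff measurable_snd.aestronglyMeasurable
          hT.aemeasurable).mpr hZ2
      · intro φ hφ
        have hmA : Measurable (fun x : XSp M₁ M₂ => φA x.1) :=
          (hAmeas φA hφA).comp measurable_fst
        have hmφ : Measurable (fun x : XSp M₁ M₂ => φ x.1) :=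
          (hAmeas φ hφ).comp measurable_fst
        rw [hMSE' _ hmA, hMSE' _ hmφ]
        have hηA : φ - φA ∈ A := A.sub_mem hφ hφA
        have hpt : ∀ ω : ΩSp M₁ M₂ N,
            (2 : ℝ) • ρC ω.1 - ω.2 - φ ω.1.1
              = ((2 : ℝ) • ρC ω.1 - ω.2 - φA ω.1.1) - (φ - φA) ω.1.1 := by
          intro ω
          simp only [Pi.sub_apply]
          abel
        have hdec : ∫ ω, ‖(2 : ℝ) • ρC ω.1 - ω.2 - φ ω.1.1‖ ^ 2 ∂F
            = ∫ ω, ‖(2 : ℝ) • ρC ω.1 - ω.2 - φA ω.1.1‖ ^ 2 ∂F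
              - 2 * ∫ ω, ⟪(2 : ℝ) • ρC ω.1 - ω.2 - φA ω.1.1, (φ - φA) ω.1.1⟫ ∂F
              + ∫ ω, ‖(φ - φA) ω.1.1‖ ^ 2 ∂F := by
          rw [integral_congr_ae (Filter.Eventually.of_forall fun ω => by rw [hpt ω])]
          have hZA : MemLp (fun ω : ΩSp M₁ M₂ N =>
              (2 : ℝ) • ρC ω.1 - ω.2 - φA ω.1.1) 2 F := hZ2.sub (hAF φA hφA)
          exact Stmt8Aux.int_norm_sub_sq hZA (hAF _ hηA)
        rw [hdec, crossA _ hηA]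
        have hnn : (0 : ℝ) ≤ ∫ ω, ‖(φ - φA) ω.1.1‖ ^ 2 ∂F :=
          integral_nonneg fun ω => sq_nonneg _
        linarith
      · intro ψ hψ
        have hmB : Measurable (fun x : XSp M₁ M₂ => ψB x.2) :=
          (hBmeas ψB hψB).comp measurable_snd
        have hmψ : Measurable (fun x : XSp M₁ M₂ => ψ x.2) :=
          (hBmeas ψ hψ).comp measurable_snd
        rw [hMSE' _ hmB, hMSE' _ hmψ]
        have hηB : ψ - ψB ∈ B := B.sub_mem hψ hψB
        have hpt : ∀ ω : ΩSp M₁ M₂ N,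
            (2 : ℝ) • ρC ω.1 - ω.2 - ψ ω.1.2
              = ((2 : ℝ) • ρC ω.1 - ω.2 - ψB ω.1.2) - (ψ - ψB) ω.1.2 := by
          intro ω
          simp only [Pi.sub_apply]
          abel
        have hdec : ∫ ω, ‖(2 : ℝ) • ρC ω.1 - ω.2 - ψ ω.1.2‖ ^ 2 ∂F
            = ∫ ω, ‖(2 : ℝ) • ρC ω.1 - ω.2 - ψB ω.1.2‖ ^ 2 ∂F
              - 2 * ∫ ω, ⟪(2 : ℝ) • ρC ω.1 - ω.2 - ψB ω.1.2, (ψ - ψB) ω.1.2⟫ ∂F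
              + ∫ ω, ‖(ψ - ψB) ω.1.2‖ ^ 2 ∂F := by
          rw [integral_congr_ae (Filter.Eventually.of_forall fun ω => by rw [hpt ω])]
          have hZB : MemLp (fun ω : ΩSp M₁ M₂ N =>
              (2 : ℝ) • ρC ω.1 - ω.2 - ψB ω.1.2) 2 F := hZ2.sub (hBF ψB hψB)
          exact Stmt8Aux.int_norm_sub_sq hZB (hBF _ hηB)
        rw [hdec, crossB _ hηB]
        have hnn : (0 : ℝ) ≤ ∫ ω, ‖(ψ - ψB) ω.1.2‖ ^ 2 ∂F :=
          integral_nonneg fun ω => sq_nonneg _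
        linarith
      · -- second moment
        rw [integral_map hT.aemeasurable (measurable_snd.norm.pow_const 2).aestronglyMeasurable]
        show ∫ ω, ‖(2 : ℝ) • ρC ω.1 - ω.2‖ ^ 2 ∂F = c
        have hrev : ∀ ω : ΩSp M₁ M₂ N,
            ‖(2 : ℝ) • ρC ω.1 - ω.2‖ ^ 2 = ‖ω.2 - (2 : ℝ) • ρC ω.1‖ ^ 2 := by
          intro ω; rw [norm_sub_rev]
        have h2ρC : MemLp (fun ω : ΩSp M₁ M₂ N => (2 : ℝ) • ρC ω.1) 2 F :=
          hρCF.const_smul (2 : ℝ)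
        rw [integral_congr_ae (Filter.Eventually.of_forall hrev),
          Stmt8Aux.int_norm_sub_sq hYF h2ρC]
        have e1 : ∫ ω, ⟪(ω : ΩSp M₁ M₂ N).2, (2 : ℝ) • ρC ω.1⟫ ∂F
            = 2 * ∫ ω, ⟪(ω : ΩSp M₁ M₂ N).2, ρC ω.1⟫ ∂F := by
          simp_rw [real_inner_smul_right]
          exact integral_const_mul 2 _
        have e2 : ∫ ω, ‖(2 : ℝ) • ρC (ω : ΩSp M₁ M₂ N).1‖ ^ 2 ∂F
            = 4 * ∫ ω, ‖ρC (ω : ΩSp M₁ M₂ N).1‖ ^ 2 ∂F := by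
          have : ∀ ω : ΩSp M₁ M₂ N, ‖(2 : ℝ) • ρC ω.1‖ ^ 2 = 4 * ‖ρC ω.1‖ ^ 2 := by
            intro ω
            rw [norm_smul, mul_pow]
            norm_num
          rw [integral_congr_ae (Filter.Eventually.of_forall this)]
          exact integral_const_mul 4 _
        rw [e1, e2, hinnerYρC, hcF]
        ring
    refine ⟨hmem', ?_⟩
    -- the parallelogram inequality for MSE
    haveI : IsProbabilityMeasure (F.map T) := Measure.isProbabilityMeasure_map hT.aemeasurable
    have hsum : 2 * MSE F ρC ≤ MSE F ρ + MSE (F.map T) ρ := by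
      have h2 : MSE (F.map T) ρ = ∫ ω, ‖(2 : ℝ) • ρC ω.1 - ω.2 - ρ ω.1‖ ^ 2 ∂F :=
        hMSE' ρ hρmeas
      have hVU : ∀ ω : ΩSp M₁ M₂ N,
          ‖ω.2 - ρ ω.1‖ ^ 2 + ‖(2 : ℝ) • ρC ω.1 - ω.2 - ρ ω.1‖ ^ 2
            = 2 * ‖ω.2 - ρC ω.1‖ ^ 2 + 2 * ‖ρC ω.1 - ρ ω.1‖ ^ 2 := by
        intro ω
        have e1 : ω.2 - ρ ω.1 = (ω.2 - ρC ω.1) + (ρC ω.1 - ρ ω.1) := by abel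
        have e2 : (2 : ℝ) • ρC ω.1 - ω.2 - ρ ω.1
            = (ρC ω.1 - ρ ω.1) - (ω.2 - ρC ω.1) := by module
        rw [e1, e2]
        exact Stmt8Aux.parallelogram_pt _ _
      have hint1 : Integrable (fun ω : ΩSp M₁ M₂ N => ‖ω.2 - ρ ω.1‖ ^ 2) F :=
        Stmt8Aux.meml2_int_norm_sq (hYF.sub hρF)
      have hint2 : Integrable
          (fun ω : ΩSp M₁ M₂ N => ‖(2 : ℝ) • ρC ω.1 - ω.2 - ρ ω.1‖ ^ 2) F :=
        Stmt8Aux.meml2_int_norm_sq (hZ2.sub hρF)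
      have hint3 : Integrable (fun ω : ΩSp M₁ M₂ N => ‖ω.2 - ρC ω.1‖ ^ 2) F :=
        Stmt8Aux.meml2_int_norm_sq (hYF.sub hρCF)
      have hint4 : Integrable (fun ω : ΩSp M₁ M₂ N => ‖ρC ω.1 - ρ ω.1‖ ^ 2) F :=
        Stmt8Aux.meml2_int_norm_sq (hρCF.sub hρF)
      have hcomb : MSE F ρ + MSE (F.map T) ρ
          = 2 * MSE F ρC + 2 * ∫ ω, ‖ρC ω.1 - ρ ω.1‖ ^ 2 ∂F := by
        rw [h2]
        show (∫ ω, ‖ω.2 - ρ ω.1‖ ^ 2 ∂F) + _ = _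
        rw [← integral_add hint1 hint2,
          integral_congr_ae (Filter.Eventually.of_forall hVU),
          integral_add (hint3.const_mul 2) (hint4.const_mul 2),
          integral_const_mul 2 _, integral_const_mul 2 _]
        rfl
      have hnn : (0 : ℝ) ≤ ∫ ω, ‖ρC ω.1 - ρ ω.1‖ ^ 2 ∂F :=
        integral_nonneg fun ω => sq_nonneg _
      linarith
    -- equality of the conditional parts
    have hDeq : ∫ ω, ‖ω.2 - condExp (sigmaX M₁ M₂ N) (F.map T) (fun ω' => ω'.2) ω‖ ^ 2 ∂(F.map T)
        = ∫ ω, ‖ω.2 - condExp (sigmaX M₁ M₂ N) F (fun ω' => ω'.2) ω‖ ^ 2 ∂F := by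
      obtain ⟨g, hgmeas, hgeq⟩ := Stmt8Aux.factor_comap_fst
        (condExp (sigmaX M₁ M₂ N) F fun ω' => ω'.2)
        (stronglyMeasurable_condExp.measurable)
      set w : ΩSp M₁ M₂ N → Euc N := fun ω => (2 : ℝ) • ρC ω.1 - g ω.1 with hw
      have hwmeas : Measurable w :=
        ((hρCmeas.comp measurable_fst).const_smul (2 : ℝ)).sub (hgmeas.comp measurable_fst)
      have hsm' : StronglyMeasurable[sigmaX M₁ M₂ N] w := by
        have h1 : Measurable[sigmaX M₁ M₂ N] (Prod.fst : ΩSp M₁ M₂ N → XSp M₁ M₂) :=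
          fun s hs => ⟨s, hs, rfl⟩
        exact ((hρCmeas.const_smul (2 : ℝ)).sub hgmeas).stronglyMeasurable.comp_measurable h1
      have hgint : Integrable (fun ω : ΩSp M₁ M₂ N => g ω.1) F := by
        rw [← hgeq]; exact integrable_condExp
      have hwT : Integrable (fun ω : ΩSp M₁ M₂ N => w (T ω)) F :=
        ((hρCF.const_smul (2 : ℝ)).integrable one_le_two).sub hgint
      have hint_w : Integrable w (F.map T) := by
        rw [integrable_map_measure hwmeas.aestronglyMeasurable hT.aemeasurable]
        exact hwT
      have hYint : Integrable (fun ω : ΩSp M₁ M₂ N => ω.2) F := hYF.integrable one_le_two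
      have hYint' : Integrable (fun ω : ΩSp M₁ M₂ N => ω.2) (F.map T) :=
        ((memLp_map_measure_iff measurable_snd.aestronglyMeasurable
          hT.aemeasurable).mpr hZ2).integrable one_le_two
      have hcond : w =ᵐ[F.map T] condExp (sigmaX M₁ M₂ N) (F.map T) (fun ω' => ω'.2) := by
        refine ae_eq_condExp_of_forall_setIntegral_eq hmle hYint'
          (fun s _ _ => hint_w.integrableOn) ?_ hsm'.aestronglyMeasurable
        intro s hs _
        have hsm2 : MeasurableSet s := hmle s hs
        obtain ⟨Bset, hBset, hpre⟩ := hs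
        have hTs : T ⁻¹' s = s := by rw [← hpre]; rfl
        rw [setIntegral_map hsm2 hwmeas.aestronglyMeasurable hT.aemeasurable,
          setIntegral_map hsm2 measurable_snd.aestronglyMeasurable hT.aemeasurable, hTs]
        show ∫ ω in s, ((2 : ℝ) • ρC ω.1 - g ω.1) ∂F
          = ∫ ω in s, ((2 : ℝ) • ρC ω.1 - ω.2) ∂F
        have hiρ : IntegrableOn (fun ω : ΩSp M₁ M₂ N => (2 : ℝ) • ρC ω.1) s F :=
          ((hρCF.const_smul (2 : ℝ)).integrable one_le_two).integrableOn
        rw [integral_sub hiρ hgint.integrableOn, integral_sub hiρ hYint.integrableOn]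
        congr 1
        have hce := setIntegral_condExp hmle hYint ⟨Bset, hBset, hpre⟩
        rw [← hgeq]
        exact hce
      have e3 : ∫ ω, ‖ω.2 - condExp (sigmaX M₁ M₂ N) (F.map T) (fun ω' => ω'.2) ω‖ ^ 2 ∂(F.map T)
          = ∫ ω, ‖ω.2 - w ω‖ ^ 2 ∂(F.map T) :=
        integral_congr_ae (by filter_upwards [hcond] with ω h; rw [← h])
      rw [e3, integral_map (f := fun ω : ΩSp M₁ M₂ N => ‖ω.2 - w ω‖ ^ 2) hT.aemeasurable
        ((measurable_snd.sub hwmeas).norm.pow_const 2).aestronglyMeasurable]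
      refine integral_congr_ae (Filter.Eventually.of_forall fun ω => ?_)
      show ‖(T ω).2 - w (T ω)‖ ^ 2
        = ‖ω.2 - condExp (sigmaX M₁ M₂ N) F (fun ω' => ω'.2) ω‖ ^ 2
      have e4 : (T ω).2 - w (T ω) = -(ω.2 - g ω.1) := by
        show ((2 : ℝ) • ρC ω.1 - ω.2) - ((2 : ℝ) • ρC ω.1 - g ω.1) = -(ω.2 - g ω.1)
        abel
      rw [e4, norm_neg, hgeq]
    -- conclude the regret inequality
    have hDF' : REG (F.map T) ρ = MSE (F.map T) ρ
        - ∫ ω, ‖ω.2 - condExp (sigmaX M₁ M₂ N) F (fun ω' => ω'.2) ω‖ ^ 2 ∂F := by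
      rw [REG, hDeq]
    rw [REG, REG, hDF']
    linarith
  -- assembling the supremum inequality
  set R := max 0 (2 * c + 2 * ∫ x, ‖ρ x‖ ^ 2 ∂ν) with hR
  have hbdd : ∀ G : Measure (ΩSp M₁ M₂ N), (⨆ _ : G ∈ S, REG G ρ) ≤ R := by
    intro G
    by_cases hG : G ∈ S
    · rw [ciSup_pos hG]
      obtain ⟨hP, hmap, hY2, -, -, hcG⟩ := hG
      haveI := hP
      refine le_trans ?_ (le_max_right _ _)
      have hρG : MemLp (fun ω : ΩSp M₁ M₂ N => ρ ω.1) 2 G := by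
        have h1 : MemLp ρ 2 (G.map Prod.fst) := by rw [hmap]; exact hρ2
        exact (memLp_map_measure_iff hρmeas.aestronglyMeasurable
          measurable_fst.aemeasurable).mp h1
      have hD0 : 0 ≤ ∫ ω, ‖ω.2 - condExp (sigmaX M₁ M₂ N) G (fun ω' => ω'.2) ω‖ ^ 2 ∂G :=
        integral_nonneg fun ω => sq_nonneg _
      have hpt : ∀ ω : ΩSp M₁ M₂ N,
          ‖ω.2 - ρ ω.1‖ ^ 2 ≤ 2 * ‖ω.2‖ ^ 2 + 2 * ‖ρ ω.1‖ ^ 2 := by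
        intro ω
        have h1 : ‖ω.2 - ρ ω.1‖ ≤ ‖ω.2‖ + ‖ρ ω.1‖ := norm_sub_le _ _
        nlinarith [norm_nonneg (ω.2 - ρ ω.1), norm_nonneg ω.2, norm_nonneg (ρ ω.1),
          sq_nonneg (‖ω.2‖ - ‖ρ ω.1‖)]
      have j1 : Integrable (fun ω : ΩSp M₁ M₂ N => 2 * ‖ω.2‖ ^ 2) G :=
        (Stmt8Aux.meml2_int_norm_sq hY2).const_mul 2
      have j2 : Integrable (fun ω : ΩSp M₁ M₂ N => 2 * ‖ρ ω.1‖ ^ 2) G :=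
        (Stmt8Aux.meml2_int_norm_sq hρG).const_mul 2
      have j3 : Integrable (fun ω : ΩSp M₁ M₂ N => 2 * ‖ω.2‖ ^ 2 + 2 * ‖ρ ω.1‖ ^ 2) G :=
        j1.add j2
      have hmono := integral_mono (Stmt8Aux.meml2_int_norm_sq (hY2.sub hρG)) j3 hpt
      have hmunu : ∫ ω, ‖ρ ω.1‖ ^ 2 ∂G = ∫ x, ‖ρ x‖ ^ 2 ∂ν := by
        rw [← hmap, integral_map measurable_fst.aemeasurable
          (hρmeas.norm.pow_const 2).aestronglyMeasurable]
      rw [integral_add j1 j2, integral_const_mul 2 _,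
        integral_const_mul 2 _, hcG, hmunu] at hmono
      have : REG G ρ ≤ MSE G ρ := by rw [REG]; linarith
      exact le_trans this hmono
    · haveI : IsEmpty (G ∈ S) := ⟨hG⟩
      rw [Real.iSup_of_isEmpty]
      exact le_max_left _ _
  have hbA : BddAbove (Set.range fun G : Measure (ΩSp M₁ M₂ N) => ⨆ _ : G ∈ S, REG G ρ) := by
    refine ⟨R, ?_⟩
    rintro x ⟨G, rfl⟩
    exact hbdd G
  have hle_sup : ∀ G ∈ S, REG G ρ ≤ ⨆ G' : Measure (ΩSp M₁ M₂ N), ⨆ _ : G' ∈ S, REG G' ρ := by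
    intro G hG
    have h1 : (⨆ _ : G ∈ S, REG G ρ) = REG G ρ := ciSup_pos hG
    rw [← h1]
    exact le_ciSup hbA G
  have hzero_mem : (0 : Measure (ΩSp M₁ M₂ N)) ∉ S := by
    rintro ⟨hP, -⟩
    have h1 := hP.measure_univ
    have h0 : (0 : Measure (ΩSp M₁ M₂ N)) Set.univ = 0 := rfl
    rw [h0] at h1
    exact zero_ne_one h1
  have hsup_nonneg : (0 : ℝ) ≤ ⨆ G' : Measure (ΩSp M₁ M₂ N), ⨆ _ : G' ∈ S, REG G' ρ := by
    have h0 : (⨆ _ : (0 : Measure (ΩSp M₁ M₂ N)) ∈ S, REG 0 ρ) = 0 := by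
      haveI : IsEmpty ((0 : Measure (ΩSp M₁ M₂ N)) ∈ S) := ⟨hzero_mem⟩
      exact Real.iSup_of_isEmpty _
    calc (0 : ℝ) = ⨆ _ : (0 : Measure (ΩSp M₁ M₂ N)) ∈ S, REG 0 ρ := h0.symm
      _ ≤ _ := le_ciSup hbA 0
  refine ciSup_le fun F => ?_
  by_cases hF : F ∈ S
  · rw [ciSup_pos hF]
    obtain ⟨hFT, hineq⟩ := main F hF
    have h1 := hle_sup F hF
    have h2 := hle_sup (F.map T) hFT
    linarith
  · haveI : IsEmpty (F ∈ S) := ⟨hF⟩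
    rw [Real.iSup_of_isEmpty]
    exact hsup_nonneg
end
end
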